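/- Let T be a pointwise and equimeasurable map with respect to an oriented hyperplane H on measurable functions, with continuous associated functions F⁺ and F⁻. Then T equals the identity, the reflection f ↦ f∘†, the polarization P_H, or the reflected polarization † ∘ P_H. -/
import Mathlib


open MeasureTheory Set RealInnerProductSpace
open scoped ENNReal

/-- The reflection of `x` in the hyperplane `u^⊥`. -/
noncomputable def reflH {n : ℕ} (u x : EuclideanSpace ℝ (Fin n)) :
    EuclideanSpace ℝ (Fin n) :=
  x - (2 * ⟪x, u⟫) • u

/-- The polarization of `f` with respect to the oriented hyperplane `u^⊥`:
`max {f(x), f(x†)}` on the halfspace `{x | ⟪x,u⟫ ≥ 0}` and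
`min {f(x), f(x†)}` on the opposite open halfspace. -/
noncomputable def polarization {n : ℕ} (u : EuclideanSpace ℝ (Fin n))
    (f : EuclideanSpace ℝ (Fin n) → ℝ) (x : EuclideanSpace ℝ (Fin n)) : ℝ :=
  if 0 ≤ ⟪x, u⟫ then max (f x) (f (reflH u x)) else min (f x) (f (reflH u x))

section Helpers

variable {n : ℕ}

lemma reflH_inner (u : EuclideanSpace ℝ (Fin n)) (hu : ‖u‖ = 1) (x : EuclideanSpace ℝ (Fin n)) :
    ⟪reflH u x, u⟫ = -⟪x, u⟫ := by
  have h : ⟪u, u⟫ = 1 := by rw [real_inner_self_eq_norm_mul_norm, hu]; ring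
  rw [reflH, inner_sub_left, real_inner_smul_left, h]
  ring

lemma reflH_invol (u : EuclideanSpace ℝ (Fin n)) (hu : ‖u‖ = 1) (x : EuclideanSpace ℝ (Fin n)) :
    reflH u (reflH u x) = x := by
  have h := reflH_inner u hu x
  rw [reflH, h]
  rw [reflH]
  module

lemma reflH_norm (u : EuclideanSpace ℝ (Fin n)) (hu : ‖u‖ = 1) (z : EuclideanSpace ℝ (Fin n)) :
    ‖reflH u z‖ = ‖z‖ := by
  have h1 : ‖reflH u z‖ ^ 2 = ‖z‖ ^ 2 := by
    rw [reflH, norm_sub_sq_real, real_inner_smul_right, norm_smul, Real.norm_eq_abs, hu,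
      mul_one, sq_abs]
    ring
  nlinarith [norm_nonneg (reflH u z), norm_nonneg z, sq_nonneg (‖reflH u z‖ - ‖z‖),
    sq_nonneg (‖reflH u z‖ + ‖z‖)]

lemma reflH_sub (u x y : EuclideanSpace ℝ (Fin n)) :
    reflH u (x - y) = reflH u x - reflH u y := by
  simp only [reflH, inner_sub_left]
  module

lemma reflH_add (u x y : EuclideanSpace ℝ (Fin n)) :
    reflH u (x + y) = reflH u x + reflH u y := by
  simp only [reflH, inner_add_left]
  module

lemma reflH_self (u : EuclideanSpace ℝ (Fin n)) (hu : ‖u‖ = 1) : reflH u u = -u := by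
  have h : ⟪u, u⟫ = 1 := by rw [real_inner_self_eq_norm_mul_norm, hu]; ring
  rw [reflH, h]
  module

lemma mem_ball_refl (u : EuclideanSpace ℝ (Fin n)) (hu : ‖u‖ = 1)
    {y : EuclideanSpace ℝ (Fin n)} {r : ℝ} (hy : y ∈ Metric.ball u r) :
    reflH u y ∈ Metric.ball (-u) r := by
  rw [Metric.mem_ball, dist_eq_norm] at hy ⊢
  have : reflH u y - -u = reflH u (y - u) := by
    rw [reflH_sub, reflH_self u hu]
  rw [this, reflH_norm u hu]
  exact hy

lemma mem_ball_refl' (u : EuclideanSpace ℝ (Fin n)) (hu : ‖u‖ = 1)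
    {y : EuclideanSpace ℝ (Fin n)} {r : ℝ} (hy : y ∈ Metric.ball (-u) r) :
    reflH u y ∈ Metric.ball u r := by
  rw [Metric.mem_ball, dist_eq_norm, sub_neg_eq_add] at hy
  rw [Metric.mem_ball, dist_eq_norm]
  have : reflH u y - u = reflH u (y + u) := by
    rw [reflH_add, reflH_self u hu]; abel
  rw [this, reflH_norm u hu]
  exact hy

lemma inner_pos_of_mem (u : EuclideanSpace ℝ (Fin n)) (hu : ‖u‖ = 1)
    {y : EuclideanSpace ℝ (Fin n)} (hy : y ∈ Metric.ball u (1/2)) : 0 < ⟪y, u⟫ := by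
  rw [Metric.mem_ball, dist_eq_norm] at hy
  have h : ⟪u, u⟫ = 1 := by rw [real_inner_self_eq_norm_mul_norm, hu]; ring
  have h2 : ⟪y - u, u⟫ = ⟪y, u⟫ - 1 := by rw [inner_sub_left, h]
  have h3 := abs_real_inner_le_norm (y - u) u
  rw [hu, h2] at h3
  have := abs_le.1 h3
  nlinarith

lemma inner_neg_of_mem (u : EuclideanSpace ℝ (Fin n)) (hu : ‖u‖ = 1)
    {y : EuclideanSpace ℝ (Fin n)} (hy : y ∈ Metric.ball (-u) (1/2)) : ⟪y, u⟫ < 0 := by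
  rw [Metric.mem_ball, dist_eq_norm, sub_neg_eq_add] at hy
  have h : ⟪u, u⟫ = 1 := by rw [real_inner_self_eq_norm_mul_norm, hu]; ring
  have h2 : ⟪y + u, u⟫ = ⟪y, u⟫ + 1 := by rw [inner_add_left, h]
  have h3 := abs_real_inner_le_norm (y + u) u
  rw [hu, h2] at h3
  have := abs_le.1 h3
  nlinarith

lemma balls_disjoint (u : EuclideanSpace ℝ (Fin n)) (hu : ‖u‖ = 1) :
    Disjoint (Metric.ball u (1/2)) (Metric.ball (-u) (1/2 : ℝ)) := by
  apply Set.disjoint_left.2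
  intro y hy hy'
  have h1 := inner_pos_of_mem u hu hy
  have h2 := inner_neg_of_mem u hu hy'
  linarith

lemma aux_pair {P Q a b : ℝ} (hmax : max P Q = max a b) (hmin : min P Q = min a b) :
    (P = a ∧ Q = b) ∨ (P = b ∧ Q = a) := by
  rcases le_total P Q with h1 | h1 <;> rcases le_total a b with h2 | h2
  · rw [max_eq_right h1, max_eq_right h2] at hmax
    rw [min_eq_left h1, min_eq_left h2] at hmin
    exact Or.inl ⟨hmin, hmax⟩
  · rw [max_eq_right h1, max_eq_left h2] at hmax
    rw [min_eq_left h1, min_eq_right h2] at hmin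
    exact Or.inr ⟨hmin, hmax⟩
  · rw [max_eq_left h1, max_eq_right h2] at hmax
    rw [min_eq_right h1, min_eq_left h2] at hmin
    exact Or.inr ⟨hmax, hmin⟩
  · rw [max_eq_left h1, max_eq_left h2] at hmax
    rw [min_eq_right h1, min_eq_right h2] at hmin
    exact Or.inl ⟨hmax, hmin⟩

lemma const_choice {F : ℝ → ℝ → ℝ} (hc : Continuous fun p : ℝ × ℝ => F p.1 p.2)
    (hker : ∀ a b, F a b = a ∨ F a b = b) {a₀ b₀ a₁ b₁ : ℝ} (h₀ : b₀ < a₀) (h₁ : b₁ < a₁)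
    (hv₀ : F a₀ b₀ = a₀) (hv₁ : F a₁ b₁ = b₁) : False := by
  set S : Set (ℝ × ℝ) := {p | p.2 < p.1} with hS
  have hconv : Convex ℝ S := by
    intro p hp q hq s t hs ht hst
    simp only [hS, Set.mem_setOf_eq, Prod.fst_add, Prod.snd_add, Prod.smul_fst, Prod.smul_snd,
      smul_eq_mul] at *
    rcases hs.lt_or_eq with hs' | hs'
    · nlinarith [mul_lt_mul_of_pos_left hp hs', mul_le_mul_of_nonneg_left hq.le ht]
    · have ht1 : t = 1 := by linarith
      rw [← hs', ht1]
      simpa using hq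
  have hpre : IsPreconnected S := hconv.isPreconnected
  set g : ℝ × ℝ → ℝ := fun p => (F p.1 p.2 - p.2) / (p.1 - p.2) with hg
  have hgc : ContinuousOn g S := by
    apply ContinuousOn.div
    · exact (hc.sub continuous_snd).continuousOn
    · exact (continuous_fst.sub continuous_snd).continuousOn
    · intro p hp
      simp only [hS, Set.mem_setOf_eq] at hp
      exact sub_ne_zero.2 (ne_of_gt hp)
  have hmem₀ : (a₀, b₀) ∈ S := h₀
  have hmem₁ : (a₁, b₁) ∈ S := h₁
  have hg₀ : g (a₀, b₀) = 1 := by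
    simp only [hg, hv₀]
    exact div_self (sub_ne_zero.2 (ne_of_gt h₀))
  have hg₁ : g (a₁, b₁) = 0 := by
    simp only [hg, hv₁, sub_self, zero_div]
  have hIcc := hpre.intermediate_value hmem₁ hmem₀ hgc
  rw [hg₀, hg₁] at hIcc
  have h2 : (1/2 : ℝ) ∈ g '' S := hIcc (by norm_num)
  obtain ⟨p, hpS, hpg⟩ := h2
  simp only [hS, Set.mem_setOf_eq] at hpS
  rcases hker p.1 p.2 with h | h
  · rw [hg] at hpg
    simp only [h] at hpg
    rw [div_self (sub_ne_zero.2 (ne_of_gt hpS))] at hpg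
    norm_num at hpg
  · rw [hg] at hpg
    simp only [h, sub_self, zero_div] at hpg
    norm_num at hpg

end Helpers

theorem stmt_11 {n : ℕ} (u : EuclideanSpace ℝ (Fin n)) (hu : ‖u‖ = 1)
    (T : (EuclideanSpace ℝ (Fin n) → ℝ) → (EuclideanSpace ℝ (Fin n) → ℝ))
    (Fp Fm : ℝ → ℝ → ℝ)
    (hdiag : ∀ s : ℝ, Fp s s = Fm s s)
    (hpt : ∀ f x, T f x =
      if 0 ≤ ⟪x, u⟫ then Fp (f x) (f (reflH u x)) else Fm (f x) (f (reflH u x)))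
    (hmeas : ∀ f, Measurable f → Measurable (T f))
    (hequi : ∀ f : EuclideanSpace ℝ (Fin n) → ℝ, Measurable f → ∀ t : ℝ,
      volume {x | t < T f x} = volume {x | t < f x})
    (hFp : Continuous (fun p : ℝ × ℝ => Fp p.1 p.2))
    (hFm : Continuous (fun p : ℝ × ℝ => Fm p.1 p.2)) :
    (∀ f, T f = f) ∨
    (∀ f, T f = fun x => f (reflH u x)) ∨
    (∀ f, T f = polarization u f) ∨
    (∀ f, T f = fun x => polarization u f (reflH u x)) := by
  classical
  have hu0 : u ≠ 0 := by
    intro h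
    rw [h] at hu
    simp at hu
  haveI : Nontrivial (EuclideanSpace ℝ (Fin n)) := nontrivial_of_ne u 0 hu0
  have htop : (volume : Measure (EuclideanSpace ℝ (Fin n))) Set.univ = ∞ :=
    measure_univ_of_isAddLeftInvariant volume
  -- Step 1: the diagonal of Fp is the identity
  have hFpd : ∀ c : ℝ, Fp c c = c := by
    intro c
    have hTf : ∀ x, T (fun _ => c) x = Fp c c := by
      intro x
      rw [hpt]
      split_ifs
      · rfl
      · exact (hdiag c).symm
    have hiff : ∀ t, t < Fp c c ↔ t < c := by
      intro t
      have h := hequi (fun _ => c) measurable_const t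
      simp only [hTf] at h
      by_cases h1 : t < Fp c c <;> by_cases h2 : t < c
      · tauto
      · exfalso
        rw [show {x : EuclideanSpace ℝ (Fin n) | t < Fp c c} = Set.univ from
            Set.eq_univ_of_forall fun _ => h1,
          show {x : EuclideanSpace ℝ (Fin n) | t < c} = ∅ from
            Set.eq_empty_iff_forall_notMem.2 fun _ => h2] at h
        rw [htop, measure_empty] at h
        exact ENNReal.top_ne_zero h
      · exfalso
        rw [show {x : EuclideanSpace ℝ (Fin n) | t < Fp c c} = ∅ from
            Set.eq_empty_iff_forall_notMem.2 fun _ => h1,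
          show {x : EuclideanSpace ℝ (Fin n) | t < c} = Set.univ from
            Set.eq_univ_of_forall fun _ => h2] at h
        rw [htop, measure_empty] at h
        exact ENNReal.top_ne_zero h.symm
      · tauto
    exact eq_of_forall_lt_iff hiff
  -- Step 2: the key multiset identity
  set B : Set (EuclideanSpace ℝ (Fin n)) := Metric.ball u (1/2) with hBdef
  set B' : Set (EuclideanSpace ℝ (Fin n)) := Metric.ball (-u) (1/2 : ℝ) with hB'def
  have hd : Disjoint B B' := balls_disjoint u hu
  have hBmeas : MeasurableSet B := measurableSet_ball
  have hB'meas : MeasurableSet B' := measurableSet_ball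
  set v := volume (Metric.ball (0 : EuclideanSpace ℝ (Fin n)) (1/2)) with hvdef
  have hvB : volume B = v := Measure.addHaar_ball_center volume u _
  have hvB' : volume B' = v := Measure.addHaar_ball_center volume (-u) _
  have hv0 : v ≠ 0 := (Metric.measure_ball_pos volume 0 (by norm_num)).ne'
  have hvtop : v ≠ ∞ := measure_ball_lt_top.ne
  have hvv : v + v ≠ v := by
    intro hh
    apply hv0
    exact (ENNReal.add_right_inj hvtop).1 (by rw [add_zero]; exact hh)
  have hvv' : v ≠ v + v := Ne.symm hvv
  have hv0' : (0 : ℝ≥0∞) ≠ v := Ne.symm hv0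
  have hvv0 : v + v ≠ 0 := by
    intro hh
    exact hv0 (by simpa using (add_eq_zero.1 hh).1)
  have hvv0' : (0 : ℝ≥0∞) ≠ v + v := Ne.symm hvv0
  have key : ∀ a b : ℝ, (Fp a b = a ∧ Fm b a = b) ∨ (Fp a b = b ∧ Fm b a = a) := by
    intro a b
    set P := Fp a b with hPdef
    set Q := Fm b a with hQdef
    set m := min (min a b) (min P Q) - 1 with hmdef
    have hma : m < a := by
      have h1 := min_le_left (min a b) (min P Q)
      have h2 := min_le_left a b
      rw [hmdef]; linarith
    have hmb : m < b := by
      have h1 := min_le_left (min a b) (min P Q)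
      have h2 := min_le_right a b
      rw [hmdef]; linarith
    have hmP : m < P := by
      have h1 := min_le_right (min a b) (min P Q)
      have h2 := min_le_left P Q
      rw [hmdef]; linarith
    have hmQ : m < Q := by
      have h1 := min_le_right (min a b) (min P Q)
      have h2 := min_le_right P Q
      rw [hmdef]; linarith
    set f : EuclideanSpace ℝ (Fin n) → ℝ :=
      fun y => if y ∈ B then a else if y ∈ B' then b else m with hfdef
    have hf : Measurable f :=
      Measurable.ite hBmeas measurable_const
        (Measurable.ite hB'meas measurable_const measurable_const)
    have hfB : ∀ y ∈ B, f y = a := fun y hy => if_pos hy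
    have hfB' : ∀ y ∈ B', f y = b := by
      intro y hy
      rw [hfdef]
      simp only
      rw [if_neg (Set.disjoint_right.1 hd hy), if_pos hy]
    have hfout : ∀ y, y ∉ B → y ∉ B' → f y = m := by
      intro y h1 h2
      rw [hfdef]
      simp only
      rw [if_neg h1, if_neg h2]
    have hTf : ∀ y, T f y = if y ∈ B then P else if y ∈ B' then Q else m := by
      intro y
      rw [hpt]
      by_cases hy : y ∈ B
      · have h1 : 0 ≤ ⟪y, u⟫ := (inner_pos_of_mem u hu hy).le
        have h2 : reflH u y ∈ B' := mem_ball_refl u hu hy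
        rw [if_pos h1, if_pos hy, hfB y hy, hfB' _ h2]
      · by_cases hy' : y ∈ B'
        · have h1 : ¬0 ≤ ⟪y, u⟫ := not_le.2 (inner_neg_of_mem u hu hy')
          have h2 : reflH u y ∈ B := mem_ball_refl' u hu hy'
          rw [if_neg h1, if_neg hy, if_pos hy', hfB' y hy', hfB _ h2]
        · have h2 : reflH u y ∉ B := by
            intro h
            apply hy'
            have := mem_ball_refl u hu h
            rwa [reflH_invol u hu] at this
          have h3 : reflH u y ∉ B' := by
            intro h
            apply hy
            have := mem_ball_refl' u hu h
            rwa [reflH_invol u hu] at this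
          rw [if_neg hy, if_neg hy', hfout y hy hy', hfout _ h2 h3]
          split_ifs
          · exact hFpd m
          · rw [← hdiag m]
            exact hFpd m
    have hvolset : ∀ (p q t : ℝ), m ≤ t →
        volume {x | t < if x ∈ B then p else if x ∈ B' then q else m} =
          (if t < p then v else 0) + (if t < q then v else 0) := by
      intro p q t ht
      have hset : {x | t < if x ∈ B then p else if x ∈ B' then q else m} =
          (if t < p then B else ∅) ∪ (if t < q then B' else ∅) := by
        ext y
        by_cases hy : y ∈ B
        · have hy' : y ∉ B' := Set.disjoint_left.1 hd hy
          simp only [Set.mem_setOf_eq, Set.mem_union, if_pos hy]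
          by_cases h1 : t < p <;> by_cases h2 : t < q <;> simp [h1, h2, hy, hy']
        · by_cases hy' : y ∈ B'
          · simp only [Set.mem_setOf_eq, Set.mem_union, if_neg hy, if_pos hy']
            by_cases h1 : t < p <;> by_cases h2 : t < q <;> simp [h1, h2, hy, hy']
          · simp only [Set.mem_setOf_eq, Set.mem_union, if_neg hy, if_neg hy']
            by_cases h1 : t < p <;> by_cases h2 : t < q <;>
              simp [h1, h2, hy, hy', not_lt.2 ht]
      rw [hset]
      by_cases h1 : t < p <;> by_cases h2 : t < q
      · rw [if_pos h1, if_pos h2, if_pos h1, if_pos h2, measure_union (hd) hB'meas, hvB, hvB']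
      · rw [if_pos h1, if_neg h2, if_pos h1, if_neg h2]
        simp [hvB]
      · rw [if_neg h1, if_pos h2, if_neg h1, if_pos h2]
        simp [hvB']
      · rw [if_neg h1, if_neg h2, if_neg h1, if_neg h2]
        simp
    have heq : ∀ t, m ≤ t → (if t < P then v else 0) + (if t < Q then v else 0) =
        (if t < a then v else 0) + (if t < b then v else 0) := by
      intro t ht
      have h := hequi f hf t
      have e1 : {x | t < T f x} =
          {x | t < if x ∈ B then P else if x ∈ B' then Q else m} := by
        ext y
        rw [Set.mem_setOf_eq, Set.mem_setOf_eq, hTf]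
      have e2 : {x | t < f x} =
          {x | t < if x ∈ B then a else if x ∈ B' then b else m} :=
        Set.ext fun y => Iff.rfl
      rw [e1, e2, hvolset P Q t ht, hvolset a b t ht] at h
      exact h
    have hcount : ∀ t, m ≤ t →
        ((t < P ∨ t < Q) ↔ (t < a ∨ t < b)) ∧ ((t < P ∧ t < Q) ↔ (t < a ∧ t < b)) := by
      intro t ht
      have h := heq t ht
      by_cases h1 : t < P <;> by_cases h2 : t < Q <;> by_cases h3 : t < a <;>
        by_cases h4 : t < b <;>
        simp only [h1, h2, h3, h4, if_true, if_false, ite_true, ite_false, add_zero,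
          zero_add] at h ⊢ <;>
        first
          | exact absurd h hv0 | exact absurd h hv0' | exact absurd h hvv
          | exact absurd h hvv' | exact absurd h hvv0 | exact absurd h hvv0'
          | tauto
    have hmax : max P Q = max a b := by
      apply eq_of_forall_lt_iff
      intro t
      rcases le_or_gt m t with ht | ht
      · rw [lt_max_iff, lt_max_iff]
        exact (hcount t ht).1
      · simp only [lt_max_iff]
        constructor <;> intro _
        · left; linarith
        · left; linarith
    have hmin : min P Q = min a b := by
      apply eq_of_forall_lt_iff
      intro t
      rcases le_or_gt m t with ht | ht
      · rw [lt_min_iff, lt_min_iff]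
        exact (hcount t ht).2
      · simp only [lt_min_iff]
        constructor <;> intro _ <;> exact ⟨by linarith, by linarith⟩
    exact aux_pair hmax hmin
  -- Step 3: dichotomy for Fp
  have hker : ∀ a b, Fp a b = a ∨ Fp a b = b := by
    intro a b
    rcases key a b with ⟨h, _⟩ | ⟨h, _⟩
    · exact Or.inl h
    · exact Or.inr h
  have hGc : Continuous fun p : ℝ × ℝ => Fp p.2 p.1 := hFp.comp continuous_swap
  have hGker : ∀ a b : ℝ, Fp b a = a ∨ Fp b a = b := by
    intro a b
    rcases hker b a with h | h
    · exact Or.inr h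
    · exact Or.inl h
  have upper1 : Fp 1 0 = 1 → ∀ a b : ℝ, b < a → Fp a b = a := by
    intro h10 a b hba
    rcases hker a b with h | h
    · exact h
    · exact (const_choice hFp hker zero_lt_one hba h10 h).elim
  have upper0 : Fp 1 0 = 0 → ∀ a b : ℝ, b < a → Fp a b = b := by
    intro h10 a b hba
    rcases hker a b with h | h
    · exact (const_choice hFp hker hba zero_lt_one h h10).elim
    · exact h
  have lower1 : Fp 0 1 = 1 → ∀ a b : ℝ, a < b → Fp a b = b := by
    intro h01 a b hab
    rcases hGker b a with h | h
    · exact h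
    · exact (const_choice hGc hGker zero_lt_one hab h01 h).elim
  have lower0 : Fp 0 1 = 0 → ∀ a b : ℝ, a < b → Fp a b = a := by
    intro h01 a b hab
    rcases hGker b a with h | h
    · exact (const_choice hGc hGker hab zero_lt_one h h01).elim
    · exact h
  rcases hker 1 0 with h10 | h10 <;> rcases hker 0 1 with h01 | h01
  · -- Fp 1 0 = 1, Fp 0 1 = 0 : identity
    have HFp : ∀ a b : ℝ, Fp a b = a := by
      intro a b
      rcases lt_trichotomy a b with h | h | h
      · exact lower0 h01 a b h
      · rw [h]; exact hFpd b
      · exact upper1 h10 a b h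
    have HFm : ∀ c d : ℝ, Fm c d = c := by
      intro c d
      rcases eq_or_ne c d with h | h
      · subst h; rw [← hdiag c]; exact hFpd c
      · rcases key d c with ⟨h1, h2⟩ | ⟨h1, h2⟩
        · exact h2
        · rw [HFp d c] at h1
          exact absurd h1.symm h
    left
    intro f
    funext x
    rw [hpt]
    split_ifs
    · exact HFp _ _
    · exact HFm _ _
  · -- Fp 1 0 = 1, Fp 0 1 = 1 : polarization
    have HFp : ∀ a b : ℝ, Fp a b = max a b := by
      intro a b
      rcases lt_trichotomy a b with h | h | h
      · rw [lower1 h01 a b h, max_eq_right h.le]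
      · rw [h, max_self]; exact hFpd b
      · rw [upper1 h10 a b h, max_eq_left h.le]
    have HFm : ∀ c d : ℝ, Fm c d = min c d := by
      intro c d
      rcases lt_trichotomy c d with h | h | h
      · rcases key d c with ⟨h1, h2⟩ | ⟨h1, h2⟩
        · rw [h2, min_eq_left h.le]
        · rw [HFp d c, max_eq_left h.le] at h1
          exact absurd h1 (ne_of_gt h)
      · rw [h, min_self, ← hdiag d]; exact hFpd d
      · rcases key d c with ⟨h1, h2⟩ | ⟨h1, h2⟩
        · rw [HFp d c, max_eq_right h.le] at h1
          exact absurd h1 (ne_of_gt h)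
        · rw [h2, min_eq_right h.le]
    right; right; left
    intro f
    funext x
    rw [hpt, polarization]
    split_ifs
    · exact HFp _ _
    · exact HFm _ _
  · -- Fp 1 0 = 0, Fp 0 1 = 0 : reflected polarization
    have HFp : ∀ a b : ℝ, Fp a b = min a b := by
      intro a b
      rcases lt_trichotomy a b with h | h | h
      · rw [lower0 h01 a b h, min_eq_left h.le]
      · rw [h, min_self]; exact hFpd b
      · rw [upper0 h10 a b h, min_eq_right h.le]
    have HFm : ∀ c d : ℝ, Fm c d = max c d := by
      intro c d
      rcases lt_trichotomy c d with h | h | h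
      · rcases key d c with ⟨h1, h2⟩ | ⟨h1, h2⟩
        · rw [HFp d c, min_eq_right h.le] at h1
          exact absurd h1 (ne_of_lt h)
        · rw [h2, max_eq_right h.le]
      · rw [h, max_self, ← hdiag d]; exact hFpd d
      · rcases key d c with ⟨h1, h2⟩ | ⟨h1, h2⟩
        · rw [h2, max_eq_left h.le]
        · rw [HFp d c, min_eq_left h.le] at h1
          exact absurd h1 (ne_of_lt h)
    right; right; right
    intro f
    funext x
    rw [hpt, polarization, reflH_invol u hu, reflH_inner u hu]
    rcases lt_trichotomy (⟪x, u⟫ : ℝ) 0 with h | h | h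
    · rw [if_neg (not_le.2 h), if_pos (by linarith : (0:ℝ) ≤ -⟪x, u⟫), HFm, max_comm]
    · have hxx : reflH u x = x := by
        rw [reflH, h]
        simp
      rw [hxx, if_pos (le_of_eq h.symm), if_pos (by rw [h, neg_zero] : (0:ℝ) ≤ -⟪x, u⟫),
        HFp, min_self, max_self]
    · rw [if_pos h.le, if_neg (not_le.2 (by linarith : -⟪x, u⟫ < 0)), HFp, min_comm]
  · -- Fp 1 0 = 0, Fp 0 1 = 1 : reflection
    have HFp : ∀ a b : ℝ, Fp a b = b := by
      intro a b
      rcases lt_trichotomy a b with h | h | h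
      · exact lower1 h01 a b h
      · rw [h]; exact hFpd b
      · exact upper0 h10 a b h
    have HFm : ∀ c d : ℝ, Fm c d = d := by
      intro c d
      rcases eq_or_ne c d with h | h
      · subst h; rw [← hdiag c]; exact hFpd c
      · rcases key d c with ⟨h1, h2⟩ | ⟨h1, h2⟩
        · rw [HFp d c] at h1
          exact absurd h1 h
        · exact h2
    right; left
    intro f
    funext x
    rw [hpt]
    split_ifs
    · exact HFp _ _
    · exact HFm _ _
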